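/- arXiv:2007.02189 — 2 statements merged into one kernel-verified Lean document; each statement's English description precedes it below -/
import Mathlib

section
/- The joint survival signature of two coherent systems is nondecreasing in each of its arguments: if l₁ ≤ m₁, l₂ ≤ m₂, l_{[1]2} ≤ m_{[1]2}, l_{1[2]} ≤ m_{1[2]} (componentwise, within admissible ranges and with the consistency constraint on shared-component counts preserved), then Φ(l₁,l₂,l_{[1]2},l_{1[2]}) ≤ Φ(m₁,m₂,m_{[1]2},m_{1[2]}). -/
open Finset

/-!
Raising any one of the four counts by one is a double-counting step. The two consecutive levels
of configurations differ in a single coordinate, a set ranging over a Boolean interval `[L, U]`: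
all of `Fin n` for the non-shared components, `[B, univ]` for the earlier shared set `A ⊇ B`,
and `[∅, A]` for the later one `B ⊆ A`. Joining a configuration to those obtained by adding one
element to that coordinate gives a biregular bipartite graph: each configuration of the lower
level has `#U - k` neighbours, each one of the upper level `k + 1 - #L`. By monotonicity of the
structure functions every neighbour of a working configuration works, so the proportion of
working configurations cannot drop.
-/

/-- The admissible configurations for two systems sharing `n₁₂` components:
the sets of functioning non-shared components of each system, together with a
nested pair of sets of functioning shared components (the set functioning at
the later time contained in the set at the earlier time), with the prescribed
cardinalities. -/
def JointConfigs (n₁ n₂ n₁₂ : ℕ) (l₁ l₂ a b : ℕ) :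
    Finset (Finset (Fin n₁) × Finset (Fin n₂) × Finset (Fin n₁₂) × Finset (Fin n₁₂)) :=
  Finset.univ.filter fun q =>
    q.1.card = l₁ ∧ q.2.1.card = l₂ ∧ q.2.2.1.card = a ∧ q.2.2.2.card = b ∧
      q.2.2.2 ⊆ q.2.2.1

/-- The joint survival signature of two systems with structure functions
`φ₁, φ₂` (each acting on the system's own components and on the shared
components): the proportion, among all equally likely admissible
configurations, of those in which both systems function. -/
noncomputable def jointSurvSig (n₁ n₂ n₁₂ : ℕ)
    (φ₁ : Finset (Fin n₁) → Finset (Fin n₁₂) → Bool)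
    (φ₂ : Finset (Fin n₂) → Finset (Fin n₁₂) → Bool)
    (l₁ l₂ a b : ℕ) : ℝ :=
  (((JointConfigs n₁ n₂ n₁₂ l₁ l₂ a b).filter fun q =>
      φ₁ q.1 q.2.2.1 = true ∧ φ₂ q.2.1 q.2.2.2 = true).card : ℝ) /
    ((JointConfigs n₁ n₂ n₁₂ l₁ l₂ a b).card : ℝ)

theorem card_filter_div_card_le_of_biregular {α β : Type*} (r : α → β → Prop)
    [∀ a b, Decidable (r a b)] {s : Finset α} {t : Finset β} {p : α → Prop} {q : β → Prop}
    [DecidablePred p] [DecidablePred q] {m n : ℕ} (hm₀ : m ≠ 0)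
    (hm : ∀ a ∈ s, #(t.bipartiteAbove r a) = m) (hn : ∀ b ∈ t, #(s.bipartiteBelow r b) = n)
    (hpq : ∀ a ∈ s, ∀ b ∈ t, r a b → p a → q b) :
    (#{a ∈ s | p a} : ℝ) / #s ≤ #{b ∈ t | q b} / #t := by
  have hedges : #s * m = #t * n := card_mul_eq_card_mul r hm hn
  have hgood : #{a ∈ s | p a} * m ≤ #{b ∈ t | q b} * n := by
    refine card_mul_le_card_mul r (fun a ha => ?_) (fun b hb => ?_)
    · rw [mem_filter] at ha
      rw [← hm a ha.1]
      refine card_le_card fun b hb => ?_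
      simp only [mem_bipartiteAbove, mem_filter] at hb ⊢
      exact ⟨⟨hb.1, hpq a ha.1 b hb.1 hb.2 ha.2⟩, hb.2⟩
    · rw [← hn b (mem_filter.1 hb).1]
      exact card_le_card (monotone_filter_left _ (filter_subset _ _))
  rcases Nat.eq_zero_or_pos n with rfl | hn₀
  · have hs : #s = 0 := by simpa [hm₀] using hedges
    simp only [hs, Nat.cast_zero, div_zero]
    positivity
  calc (#{a ∈ s | p a} : ℝ) / #s = #{a ∈ s | p a} * m / (#s * m) := by
        rw [mul_div_mul_right _ _ (by exact_mod_cast hm₀)]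
    _ ≤ #{b ∈ t | q b} * n / (#s * m) :=
        div_le_div_of_nonneg_right (by exact_mod_cast hgood) (by positivity)
    _ = #{b ∈ t | q b} * n / (#t * n) := by congr 1; exact_mod_cast hedges
    _ = #{b ∈ t | q b} / #t := by
        rw [mul_div_mul_right _ _ (by exact_mod_cast hn₀.ne')]

section Powerset

variable {α : Type*} [DecidableEq α]

theorem card_filter_powerset_superset_card_succ {s U : Finset α} (hsU : s ⊆ U) :
    #{t ∈ U.powerset | s ⊆ t ∧ #t = #s + 1} = #(U \ s) := by
  suffices h : {t ∈ U.powerset | s ⊆ t ∧ #t = #s + 1} = (U \ s).image (insert · s) by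
    rw [h, card_image_of_injOn fun x hx y _ h => (insert_inj (mem_sdiff.1 hx).2).1 h]
  ext t
  simp only [mem_filter, mem_powerset, mem_image, mem_sdiff]
  constructor
  · rintro ⟨htU, hst, hcard⟩
    obtain ⟨x, hx, rfl⟩ := exists_eq_insert_iff.2 ⟨hst, hcard.symm⟩
    exact ⟨x, ⟨htU (mem_insert_self x s), hx⟩, rfl⟩
  · rintro ⟨x, ⟨hxU, hx⟩, rfl⟩
    exact ⟨insert_subset hxU hsU, subset_insert x s, card_insert_of_notMem hx⟩

theorem card_filter_powerset_subset_card_pred {L t : Finset α} (hLt : L ⊆ t) :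
    #{s ∈ t.powerset | L ⊆ s ∧ #s + 1 = #t} = #(t \ L) := by
  suffices h : {s ∈ t.powerset | L ⊆ s ∧ #s + 1 = #t} = (t \ L).image t.erase by
    rw [h, card_image_of_injOn fun x hx y _ h => (erase_inj t (mem_sdiff.1 hx).1).1 h]
  ext s
  simp only [mem_filter, mem_powerset, mem_image, mem_sdiff]
  constructor
  · rintro ⟨hst, hLs, hcard⟩
    obtain ⟨x, hx, rfl⟩ := exists_eq_insert_iff.2 ⟨hst, hcard⟩
    exact ⟨x, ⟨mem_insert_self x s, fun h => hx (hLs h)⟩, erase_insert hx⟩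
  · rintro ⟨x, ⟨hxt, hxL⟩, rfl⟩
    refine ⟨erase_subset x t, fun y hy => mem_erase.2 ⟨fun h => hxL (h ▸ hy), hLt hy⟩, ?_⟩
    rw [card_erase_of_mem hxt, Nat.sub_add_cancel (card_pos.2 ⟨x, hxt⟩)]

end Powerset

section FiberLevel

variable {γ δ : Type*} [Fintype γ] [DecidableEq γ] [Fintype δ]
  (P : δ → Prop) [DecidablePred P] (L U : δ → Finset γ)

def fiberLevel (k : ℕ) : Finset (Finset γ × δ) :=
  {x | P x.2 ∧ L x.2 ⊆ x.1 ∧ x.1 ⊆ U x.2 ∧ #x.1 = k}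

variable {P L U} {k u l : ℕ}

theorem card_bipartiteAbove_fiberLevel [DecidableEq δ] (hU : ∀ d, P d → #(U d) = u)
    {x : Finset γ × δ} (hx : x ∈ fiberLevel P L U k) :
    #((fiberLevel P L U (k + 1)).bipartiteAbove (fun x y => x.2 = y.2 ∧ x.1 ⊆ y.1) x) = u - k := by
  simp only [fiberLevel, mem_filter, mem_univ, true_and] at hx
  obtain ⟨hP, hLx, hxU, hk⟩ := hx
  suffices h : (fiberLevel P L U (k + 1)).bipartiteAbove (fun x y => x.2 = y.2 ∧ x.1 ⊆ y.1) x =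
      {t ∈ (U x.2).powerset | x.1 ⊆ t ∧ #t = #x.1 + 1}.map (Function.Embedding.sectL _ x.2) by
    rw [h, card_map, card_filter_powerset_superset_card_succ hxU, card_sdiff_of_subset hxU,
      hU _ hP, hk]
  ext ⟨t, d⟩
  simp only [fiberLevel, mem_bipartiteAbove, mem_filter, mem_univ, true_and, mem_map,
    mem_powerset, Function.Embedding.sectL_apply, Prod.mk.injEq]
  constructor
  · rintro ⟨⟨-, -, htU, htk⟩, rfl, hxt⟩
    exact ⟨t, ⟨htU, hxt, by rw [htk, hk]⟩, rfl, rfl⟩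
  · rintro ⟨t, ⟨htU, hxt, htk⟩, rfl, rfl⟩
    exact ⟨⟨hP, hLx.trans hxt, htU, by rw [htk, hk]⟩, rfl, hxt⟩

theorem card_bipartiteBelow_fiberLevel [DecidableEq δ] (hL : ∀ d, P d → #(L d) = l)
    {y : Finset γ × δ} (hy : y ∈ fiberLevel P L U (k + 1)) :
    #((fiberLevel P L U k).bipartiteBelow (fun x y => x.2 = y.2 ∧ x.1 ⊆ y.1) y) = k + 1 - l := by
  simp only [fiberLevel, mem_filter, mem_univ, true_and] at hy
  obtain ⟨hP, hLy, hyU, hk⟩ := hy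
  suffices h : (fiberLevel P L U k).bipartiteBelow (fun x y => x.2 = y.2 ∧ x.1 ⊆ y.1) y =
      {s ∈ y.1.powerset | L y.2 ⊆ s ∧ #s + 1 = #y.1}.map (Function.Embedding.sectL _ y.2) by
    rw [h, card_map, card_filter_powerset_subset_card_pred hLy, card_sdiff_of_subset hLy,
      hL _ hP, hk]
  ext ⟨s, d⟩
  simp only [fiberLevel, mem_bipartiteBelow, mem_filter, mem_univ, true_and, mem_map,
    mem_powerset, Function.Embedding.sectL_apply, Prod.mk.injEq]
  constructor
  · rintro ⟨⟨-, hLs, -, hsk⟩, rfl, hsy⟩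
    exact ⟨s, ⟨hsy, hLs, by rw [hsk, hk]⟩, rfl, rfl⟩
  · rintro ⟨s, ⟨hsy, hLs, hsk⟩, rfl, rfl⟩
    exact ⟨⟨hP, hLs, hsy.trans hyU, by omega⟩, rfl, hsy⟩

theorem fiberLevel_ratio_le_succ (G : Finset γ × δ → Prop) [DecidablePred G]
    (hG : ∀ d s t, s ⊆ t → G (s, d) → G (t, d))
    (hU : ∀ d, P d → #(U d) = u) (hL : ∀ d, P d → #(L d) = l) (hk : k < u) :
    (#{x ∈ fiberLevel P L U k | G x} : ℝ) / #(fiberLevel P L U k) ≤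
      #{x ∈ fiberLevel P L U (k + 1) | G x} / #(fiberLevel P L U (k + 1)) := by
  classical
  exact card_filter_div_card_le_of_biregular _ (Nat.sub_ne_zero_of_lt hk)
    (fun x hx => card_bipartiteAbove_fiberLevel hU hx)
    (fun y hy => card_bipartiteBelow_fiberLevel hL hy)
    (fun x _ y _ ⟨hxy, hsub⟩ hGx => by
      obtain ⟨s, d⟩ := x; obtain ⟨t, d'⟩ := y; cases hxy; exact hG d s t hsub hGx)

end FiberLevel

theorem card_filter_image_div_card_image {α β : Type*} [DecidableEq β] {f : α → β}
    (hf : Function.Injective f) (s : Finset α) (p : β → Prop) [DecidablePred p] :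
    (#{y ∈ s.image f | p y} : ℝ) / #(s.image f) = #{x ∈ s | p (f x)} / #s := by
  rw [filter_image, card_image_of_injective _ hf, card_image_of_injective _ hf]

section JointConfigs

variable {n₁ n₂ n₁₂ : ℕ}

theorem jointConfigs_eq_fiberLevel_l₁ (l₁ l₂ a b : ℕ) :
    JointConfigs n₁ n₂ n₁₂ l₁ l₂ a b =
      fiberLevel (fun d => #d.1 = l₂ ∧ #d.2.1 = a ∧ #d.2.2 = b ∧ d.2.2 ⊆ d.2.1)
        (fun _ => ∅) (fun _ => univ) l₁ := by
  ext; simp [JointConfigs, fiberLevel, and_comm]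

theorem jointConfigs_eq_image_fiberLevel_l₂ (l₁ l₂ a b : ℕ) :
    JointConfigs n₁ n₂ n₁₂ l₁ l₂ a b =
      (fiberLevel (fun d : Finset (Fin n₁) × Finset (Fin n₁₂) × Finset (Fin n₁₂) =>
          #d.1 = l₁ ∧ #d.2.1 = a ∧ #d.2.2 = b ∧ d.2.2 ⊆ d.2.1)
        (fun _ => ∅) (fun _ => univ) l₂).image
        fun x => (x.2.1, x.1, x.2.2) := by
  ext ⟨A₁, A₂, A, B⟩; simp [JointConfigs, fiberLevel, and_comm, and_left_comm, and_assoc]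

theorem jointConfigs_eq_image_fiberLevel_a (l₁ l₂ a b : ℕ) :
    JointConfigs n₁ n₂ n₁₂ l₁ l₂ a b =
      (fiberLevel (fun d : Finset (Fin n₁) × Finset (Fin n₂) × Finset (Fin n₁₂) =>
          #d.1 = l₁ ∧ #d.2.1 = l₂ ∧ #d.2.2 = b)
        (fun d => d.2.2) (fun _ => univ) a).image
        fun x => (x.2.1, x.2.2.1, x.1, x.2.2.2) := by
  ext ⟨A₁, A₂, A, B⟩; simp [JointConfigs, fiberLevel, and_comm, and_left_comm, and_assoc]

theorem jointConfigs_eq_image_fiberLevel_b (l₁ l₂ a b : ℕ) :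
    JointConfigs n₁ n₂ n₁₂ l₁ l₂ a b =
      (fiberLevel (fun d : Finset (Fin n₁) × Finset (Fin n₂) × Finset (Fin n₁₂) =>
          #d.1 = l₁ ∧ #d.2.1 = l₂ ∧ #d.2.2 = a)
        (fun _ => ∅) (fun d => d.2.2) b).image
        fun x => (x.2.1, x.2.2.1, x.2.2.2, x.1) := by
  ext ⟨A₁, A₂, A, B⟩; simp [JointConfigs, fiberLevel, and_comm, and_left_comm, and_assoc]

variable (φ₁ : Finset (Fin n₁) → Finset (Fin n₁₂) → Bool)
  (φ₂ : Finset (Fin n₂) → Finset (Fin n₁₂) → Bool)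

theorem jointSurvSig_le_succ_l₁ (hφ₁ : ∀ A A' B, A ⊆ A' → φ₁ A B = true → φ₁ A' B = true)
    {l₁ : ℕ} (l₂ a b : ℕ) (hl₁ : l₁ < n₁) :
    jointSurvSig n₁ n₂ n₁₂ φ₁ φ₂ l₁ l₂ a b ≤ jointSurvSig n₁ n₂ n₁₂ φ₁ φ₂ (l₁ + 1) l₂ a b := by
  simp only [jointSurvSig, jointConfigs_eq_fiberLevel_l₁]
  exact fiberLevel_ratio_le_succ _ (fun _ _ _ hst h => ⟨hφ₁ _ _ _ hst h.1, h.2⟩)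
    (u := n₁) (l := 0) (by simp) (by simp) hl₁

theorem jointSurvSig_le_succ_l₂ (hφ₂ : ∀ A A' B, A ⊆ A' → φ₂ A B = true → φ₂ A' B = true)
    (l₁ : ℕ) {l₂ : ℕ} (a b : ℕ) (hl₂ : l₂ < n₂) :
    jointSurvSig n₁ n₂ n₁₂ φ₁ φ₂ l₁ l₂ a b ≤ jointSurvSig n₁ n₂ n₁₂ φ₁ φ₂ l₁ (l₂ + 1) a b := by
  simp only [jointSurvSig, jointConfigs_eq_image_fiberLevel_l₂]
  rw [card_filter_image_div_card_image, card_filter_image_div_card_image]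
  · exact fiberLevel_ratio_le_succ _ (fun _ _ _ hst h => ⟨h.1, hφ₂ _ _ _ hst h.2⟩)
      (u := n₂) (l := 0) (by simp) (by simp) hl₂
  all_goals exact fun x y h => by simp_all [Prod.ext_iff]

theorem jointSurvSig_le_succ_a (hφ₁ : ∀ A B B', B ⊆ B' → φ₁ A B = true → φ₁ A B' = true)
    (l₁ l₂ : ℕ) {a : ℕ} (b : ℕ) (ha : a < n₁₂) :
    jointSurvSig n₁ n₂ n₁₂ φ₁ φ₂ l₁ l₂ a b ≤ jointSurvSig n₁ n₂ n₁₂ φ₁ φ₂ l₁ l₂ (a + 1) b := by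
  simp only [jointSurvSig, jointConfigs_eq_image_fiberLevel_a]
  rw [card_filter_image_div_card_image, card_filter_image_div_card_image]
  · exact fiberLevel_ratio_le_succ _ (fun _ _ _ hst h => ⟨hφ₁ _ _ _ hst h.1, h.2⟩)
      (u := n₁₂) (l := b) (by simp) (fun _ hd => hd.2.2) ha
  all_goals exact fun x y h => by simp_all [Prod.ext_iff]

theorem jointSurvSig_le_succ_b (hφ₂ : ∀ A B B', B ⊆ B' → φ₂ A B = true → φ₂ A B' = true)
    (l₁ l₂ a : ℕ) {b : ℕ} (hb : b < a) :
    jointSurvSig n₁ n₂ n₁₂ φ₁ φ₂ l₁ l₂ a b ≤ jointSurvSig n₁ n₂ n₁₂ φ₁ φ₂ l₁ l₂ a (b + 1) := by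
  simp only [jointSurvSig, jointConfigs_eq_image_fiberLevel_b]
  rw [card_filter_image_div_card_image, card_filter_image_div_card_image]
  · exact fiberLevel_ratio_le_succ _ (fun _ _ _ hst h => ⟨h.1, hφ₂ _ _ _ hst h.2⟩)
      (u := a) (l := 0) (fun _ hd => hd.2.2) (by simp) hb
  all_goals exact fun x y h => by simp_all [Prod.ext_iff]

end JointConfigs

theorem jointSurvSig_monotone_general (n₁ n₂ n₁₂ : ℕ)
    (φ₁ : Finset (Fin n₁) → Finset (Fin n₁₂) → Bool)
    (φ₂ : Finset (Fin n₂) → Finset (Fin n₁₂) → Bool)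
    (hφ₁ : ∀ A A' B B', A ⊆ A' → B ⊆ B' → φ₁ A B = true → φ₁ A' B' = true)
    (hφ₂ : ∀ A A' B B', A ⊆ A' → B ⊆ B' → φ₂ A B = true → φ₂ A' B' = true)
    (l₁ l₂ a b m₁ m₂ a' b' : ℕ)
    (h₁ : l₁ ≤ m₁) (h₂ : l₂ ≤ m₂) (h₃ : a ≤ a') (h₄ : b ≤ b')
    (hm₁ : m₁ ≤ n₁) (hm₂ : m₂ ≤ n₂) (ha' : a' ≤ n₁₂)
    (hba' : b' ≤ a') :
    jointSurvSig n₁ n₂ n₁₂ φ₁ φ₂ l₁ l₂ a b ≤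
      jointSurvSig n₁ n₂ n₁₂ φ₁ φ₂ m₁ m₂ a' b' := by
  set Φ := jointSurvSig n₁ n₂ n₁₂ φ₁ φ₂
  have mono_l₁ : MonotoneOn (Φ · l₂ a b) (Set.Iic n₁) :=
    monotoneOn_of_le_add_one Set.ordConnected_Iic fun _ _ _ hk =>
      jointSurvSig_le_succ_l₁ φ₁ φ₂ (fun A A' B hA => hφ₁ A A' B B hA subset_rfl) l₂ a b hk
  have mono_l₂ : MonotoneOn (Φ m₁ · a b) (Set.Iic n₂) :=
    monotoneOn_of_le_add_one Set.ordConnected_Iic fun _ _ _ hk =>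
      jointSurvSig_le_succ_l₂ φ₁ φ₂ (fun A A' B hA => hφ₂ A A' B B hA subset_rfl) m₁ a b hk
  have mono_a : MonotoneOn (Φ m₁ m₂ · b) (Set.Iic n₁₂) :=
    monotoneOn_of_le_add_one Set.ordConnected_Iic fun _ _ _ hk =>
      jointSurvSig_le_succ_a φ₁ φ₂ (fun A B B' hB => hφ₁ A A B B' subset_rfl hB) m₁ m₂ b hk
  have mono_b : MonotoneOn (Φ m₁ m₂ a' ·) (Set.Iic a') :=
    monotoneOn_of_le_add_one Set.ordConnected_Iic fun _ _ _ hk =>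
      jointSurvSig_le_succ_b φ₁ φ₂ (fun A B B' hB => hφ₂ A A B B' subset_rfl hB) m₁ m₂ a' hk
  calc Φ l₁ l₂ a b
      ≤ Φ m₁ l₂ a b := mono_l₁ (h₁.trans hm₁) hm₁ h₁
    _ ≤ Φ m₁ m₂ a b := mono_l₂ (h₂.trans hm₂) hm₂ h₂
    _ ≤ Φ m₁ m₂ a' b := mono_a (h₃.trans ha') ha' h₃
    _ ≤ Φ m₁ m₂ a' b' := mono_b (h₄.trans hba') hba' h₄

/-- the joint survival signature of two coherent systems is
nondecreasing in each of its arguments. -/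
theorem jointSurvSig_monotone (n₁ n₂ n₁₂ : ℕ)
    (φ₁ : Finset (Fin n₁) → Finset (Fin n₁₂) → Bool)
    (φ₂ : Finset (Fin n₂) → Finset (Fin n₁₂) → Bool)
    (hφ₁ : ∀ A A' B B', A ⊆ A' → B ⊆ B' → φ₁ A B = true → φ₁ A' B' = true)
    (hφ₂ : ∀ A A' B B', A ⊆ A' → B ⊆ B' → φ₂ A B = true → φ₂ A' B' = true)
    (l₁ l₂ a b m₁ m₂ a' b' : ℕ)
    (h₁ : l₁ ≤ m₁) (h₂ : l₂ ≤ m₂) (h₃ : a ≤ a') (h₄ : b ≤ b')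
    (hm₁ : m₁ ≤ n₁) (hm₂ : m₂ ≤ n₂) (ha' : a' ≤ n₁₂)
    (hba : b ≤ a) (hba' : b' ≤ a') :
    jointSurvSig n₁ n₂ n₁₂ φ₁ φ₂ l₁ l₂ a b ≤
      jointSurvSig n₁ n₂ n₁₂ φ₁ φ₂ m₁ m₂ a' b' :=
  jointSurvSig_monotone_general n₁ n₂ n₁₂ φ₁ φ₂ hφ₁ hφ₂ l₁ l₂ a b m₁ m₂ a' b' h₁ h₂ h₃ h₄ hm₁ hm₂
    ha' hba'
end

section
/- For a coherent system with one type of component (K = 1), the survival signature satisfies Φ(l) = Σ_{j = n−l+1}^{n} s_j for l = 1,…,n, where s_j is Samaniego's signature, i.e., s_j is the probability that the system fails at the j-th ordered component failure; equivalently, Φ(l) = |{x ∈ {0,1}^n : Σxᵢ = l, φ(x) = 1}| / C(n, l) equals the proportion of permutations σ of the components such that the system, with exactly the last l components (in the failure order σ) still functioning, functions. -/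
open Finset

/-- The component state vector after the first `j` failures, when the
components fail in the order `σ 0, σ 1, …, σ (n-1)`: component `i` still
functions iff its position `σ⁻¹ i` in the failure order is at least `j`;
exactly the last `n - j` components in the failure order (equivalently, the
last `l` components when `j = n - l`) are functioning. -/
def stateAfter {n : ℕ} (σ : Equiv.Perm (Fin n)) (j : ℕ) : Fin n → Bool :=
  fun i => decide (j ≤ ((σ.symm i : Fin n) : ℕ))

/-- The survival signature `Φ(l)` of a system with one type of component:
the proportion of weight-`l` state vectors for which the system functions. -/
noncomputable def survSig (n : ℕ) (φ : (Fin n → Bool) → Bool) (l : ℕ) : ℝ :=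
  ((Finset.univ.filter fun x : Fin n → Bool =>
      (Finset.univ.filter fun i => x i = true).card = l ∧ φ x = true).card : ℝ) /
    (n.choose l : ℝ)

/-- Samaniego's signature `s j`: the proportion of failure orders (permutations)
for which the system state flips from functioning to failed exactly at the
`j`-th component failure. -/
noncomputable def samaniego (n : ℕ) (φ : (Fin n → Bool) → Bool) (j : ℕ) : ℝ :=
  ((Finset.univ.filter fun σ : Equiv.Perm (Fin n) =>
      φ (stateAfter σ (j - 1)) = true ∧ φ (stateAfter σ j) = false).card : ℝ) /
    (n.factorial : ℝ)

/-!
Reading a failure order `σ` backwards, the state with only the last `l` components working is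
`stateAfter σ (n - l)`, and each state vector of weight `l` arises from exactly `l! (n - l)!`
orders (permute the working and the failed components among themselves). Hence `Φ(l)` is the
proportion of orders under which the system still works after `n - l` failures. If `S j` counts
the orders under which it works after `j` failures, monotonicity of `φ` makes `S` antitone, so
`n! s_j = S (j - 1) - S j`; the sum of the `s_j` telescopes to `S (n - l) - S n`, and `S n = 0`
because `φ 0 = 0`.
-/

open Equiv

section PermFibers

variable {α ι : Type*} [Fintype α] [DecidableEq ι]

theorem exists_perm_comp_eq_of_card_fiber_eq {f g : α → ι}
    (h : ∀ i, Fintype.card {a // f a = i} = Fintype.card {a // g a = i}) :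
    ∃ τ : Perm α, g ∘ τ = f :=
  ⟨ofFiberEquiv fun i => Fintype.equivOfCardEq (h i), funext (ofFiberEquiv_map _)⟩

theorem card_perm_comp_eq_of_card_fiber_eq [DecidableEq α] [Fintype ι] {f g : α → ι}
    (h : ∀ i, Fintype.card {a // f a = i} = Fintype.card {a // g a = i}) :
    Fintype.card {σ : Perm α // g ∘ σ = f} =
      ∏ i, (Fintype.card {a // f a = i}).factorial := by
  obtain ⟨τ, rfl⟩ := exists_perm_comp_eq_of_card_fiber_eq h
  rw [← DomMulAct.stabilizer_card]
  refine Fintype.card_congr (subtypeEquiv (Equiv.mulLeft τ⁻¹) fun σ => ?_)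
  simp [funext_iff]

end PermFibers

theorem Fintype.card_subtype_eq_false {α : Type*} [Fintype α] (f : α → Bool) :
    card {a // f a = false} = card α - #{a | f a = true} := by
  simp only [← Bool.not_eq_true]
  rw [card_subtype_compl, card_subtype]

theorem Fintype.card_subtype_eq_bool_of_card_filter_eq {α : Type*} [Fintype α] {f g : α → Bool}
    (h : #{a | f a = true} = #{a | g a = true}) (b : Bool) :
    card {a // f a = b} = card {a // g a = b} := by
  cases b
  · rw [card_subtype_eq_false, card_subtype_eq_false, h]
  · simp only [card_subtype, h]

theorem Finset.sum_Icc_succ_sub {M : Type*} [AddCommGroup M] (f : ℕ → M) {a b : ℕ}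
    (hab : a ≤ b) :
    ∑ j ∈ Icc (a + 1) b, (f (j - 1) - f j) = f a - f b := by
  induction b, hab using Nat.le_induction with
  | base => simp
  | succ b hab ih =>
    rw [sum_Icc_succ_top (by omega), ih, Nat.add_sub_cancel]
    abel

section StateAfter

variable {n : ℕ}

theorem stateAfter_eq_iff (σ : Perm (Fin n)) (m : ℕ) (x : Fin n → Bool) :
    stateAfter σ m = x ↔ x ∘ σ = stateAfter 1 m := by
  rw [show stateAfter σ m = stateAfter 1 m ∘ σ.symm from rfl, comp_symm_eq, eq_comm]

theorem card_filter_stateAfter (σ : Perm (Fin n)) (m : ℕ) :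
    #{i | stateAfter σ m i = true} = n - m := by
  have hlt := Fin.card_filter_val_lt (n := n) (m := m)
  have hsplit := card_filter_add_card_filter_not (s := univ) (p := fun k : Fin n => (k : ℕ) < m)
  rw [Finset.card_univ, Fintype.card_fin] at hsplit
  rw [card_equiv σ.symm (t := {k : Fin n | ¬ (k : ℕ) < m}) (by simp [stateAfter])]
  omega

theorem stateAfter_of_le (σ : Perm (Fin n)) {a b : ℕ} (hab : a ≤ b) {i : Fin n}
    (h : stateAfter σ b i = true) : stateAfter σ a i = true := by
  simp only [stateAfter, decide_eq_true_eq] at h ⊢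
  omega

theorem stateAfter_self (σ : Perm (Fin n)) : stateAfter σ n = fun _ => false := by
  funext i
  simp [stateAfter, (σ.symm i).isLt]

theorem card_filter_stateAfter_eq {l : ℕ} (hl : l ≤ n) {x : Fin n → Bool}
    (hx : #{i | x i = true} = l) :
    #{σ : Perm (Fin n) | stateAfter σ (n - l) = x} = l.factorial * (n - l).factorial := by
  have hweight : #{i | stateAfter (1 : Perm (Fin n)) (n - l) i = true} = l := by
    rw [card_filter_stateAfter]; omega
  simp only [stateAfter_eq_iff]
  rw [← Fintype.card_subtype, card_perm_comp_eq_of_card_fiber_eq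
      (Fintype.card_subtype_eq_bool_of_card_filter_eq (hweight.trans hx.symm)),
    Fintype.prod_bool, Fintype.card_subtype_eq_false, Fintype.card_subtype, hweight,
    Fintype.card_fin]

theorem card_filter_perm_survives_eq_mul (φ : (Fin n → Bool) → Bool) {l : ℕ} (hl : l ≤ n) :
    #{σ : Perm (Fin n) | φ (stateAfter σ (n - l)) = true} =
      #{x : Fin n → Bool | #{i | x i = true} = l ∧ φ x = true} *
        (l.factorial * (n - l).factorial) := by
  rw [card_eq_sum_card_fiberwise (f := fun σ => stateAfter σ (n - l)), sum_const_nat]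
  · intro x hx
    simp only [mem_filter, mem_univ, true_and] at hx
    rw [filter_filter, ← card_filter_stateAfter_eq hl hx.1]
    congr 1
    ext σ
    simp only [mem_filter, mem_univ, true_and, and_iff_right_iff_imp]
    rintro rfl
    exact hx.2
  · intro σ hσ
    simp only [coe_filter, mem_univ, true_and, Set.mem_ofPred_eq] at hσ ⊢
    exact ⟨by rw [card_filter_stateAfter]; omega, hσ⟩

theorem card_filter_failsAt_add {φ : (Fin n → Bool) → Bool}
    (hφ : ∀ x y : Fin n → Bool, (∀ i, x i = true → y i = true) →
      φ x = true → φ y = true)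
    (j : ℕ) :
    #{σ : Perm (Fin n) | φ (stateAfter σ (j - 1)) = true ∧ φ (stateAfter σ j) = false} +
      #{σ : Perm (Fin n) | φ (stateAfter σ j) = true} =
      #{σ : Perm (Fin n) | φ (stateAfter σ (j - 1)) = true} := by
  rw [← card_sdiff_add_card_eq_card (monotone_filter_right univ fun σ _ =>
    hφ _ _ fun _ => stateAfter_of_le σ (Nat.sub_le j 1)), ← filter_and_not]
  simp only [Bool.not_eq_true]

end StateAfter

theorem survSig_eq_card_filter_perm_div {n : ℕ} (φ : (Fin n → Bool) → Bool) {l : ℕ}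
    (hl : l ≤ n) :
    survSig n φ l =
      (#{σ : Perm (Fin n) | φ (stateAfter σ (n - l)) = true} : ℝ) / (n.factorial : ℝ) := by
  have hchoose : (n.choose l : ℝ) ≠ 0 := by exact_mod_cast (Nat.choose_pos hl).ne'
  rw [survSig, card_filter_perm_survives_eq_mul φ hl,
    ← Nat.choose_mul_factorial_mul_factorial hl]
  push_cast
  field_simp

theorem survSig_eq_sum_samaniego_general
    (n : ℕ) (φ : (Fin n → Bool) → Bool)
    (hmono : ∀ x y : Fin n → Bool, (∀ i, x i = true → y i = true) →
      φ x = true → φ y = true)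
    (hbot : φ (fun _ => false) = false)
    (l : ℕ) (hln : l ≤ n) :
    survSig n φ l = ∑ j ∈ Finset.Icc (n - l + 1) n, samaniego n φ j ∧
    survSig n φ l =
      ((Finset.univ.filter fun σ : Equiv.Perm (Fin n) =>
          φ (stateAfter σ (n - l)) = true).card : ℝ) / (n.factorial : ℝ) := by
  set survivors : ℕ → ℕ := fun j => #{σ : Perm (Fin n) | φ (stateAfter σ j) = true}
  have hsurv := survSig_eq_card_filter_perm_div φ hln
  refine ⟨?_, hsurv⟩
  have hnone : survivors n = 0 := by simp [survivors, stateAfter_self, hbot]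
  have hterm (j : ℕ) :
      samaniego n φ j = ((survivors (j - 1) : ℝ) - survivors j) / n.factorial := by
    simp only [survivors, samaniego]
    rw [← card_filter_failsAt_add hmono j, Nat.cast_add, add_sub_cancel_right]
  rw [hsurv, sum_congr rfl fun j _ => hterm j, ← sum_div,
    sum_Icc_succ_sub (fun j => (survivors j : ℝ)) (Nat.sub_le n l), hnone, Nat.cast_zero,
    sub_zero]

/-- for a coherent system with one type of component,
`Φ(l) = Σ_{j = n−l+1}^{n} s_j`; equivalently, `Φ(l)` equals the proportion of
permutations (failure orders) such that the system functions with exactly the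
last `l` components in that order still functioning. -/
theorem survSig_eq_sum_samaniego
    (n : ℕ) (φ : (Fin n → Bool) → Bool)
    (hmono : ∀ x y : Fin n → Bool, (∀ i, x i = true → y i = true) →
      φ x = true → φ y = true)
    (hbot : φ (fun _ => false) = false) (htop : φ (fun _ => true) = true)
    (l : ℕ) (hl1 : 1 ≤ l) (hln : l ≤ n) :
    survSig n φ l = ∑ j ∈ Finset.Icc (n - l + 1) n, samaniego n φ j ∧
    survSig n φ l =
      ((Finset.univ.filter fun σ : Equiv.Perm (Fin n) =>
          φ (stateAfter σ (n - l)) = true).card : ℝ) / (n.factorial : ℝ) :=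
  survSig_eq_sum_samaniego_general n φ hmono hbot l hln
end
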